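/- Let (R(t))_{t>0} be a strongly continuous family of bounded linear operators on X with ∫_0^∞ ‖R(v)‖ dv < ∞. Suppose that lim_{T→+∞} (∫_{-T}^{T} ρ₂(t) dt) / (∫_{-T}^{T} ρ₁(t) dt) = 0 and that q ∈ B^1WPAA_0(ℝ, X, ρ₁, ρ₂) is essentially bounded. Then the function Q(t) := ∫_{-∞}^{t} R(t−s) q(s) ds belongs to B^1WPAA_0(ℝ, X, ρ₁, ρ₂). -/

import Mathlib

open MeasureTheory Filter Set

/-- A weight of class `U_∞`: locally integrable, a.e. positive, and
`∫_{-T}^{T} ρ(t) dt → ∞` as `T → +∞`. -/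
def IsWeightUInfty (ρ : ℝ → ℝ) : Prop :=
  (∀ a b : ℝ, IntervalIntegrable ρ MeasureTheory.volume a b) ∧
  (∀ᵐ t : ℝ ∂MeasureTheory.volume, 0 < ρ t) ∧
  Filter.Tendsto (fun T : ℝ => ∫ t in (-T)..T, ρ t) Filter.atTop Filter.atTop

/-- Membership in `B^1WPAA_0(ℝ, X, ρ₁, ρ₂)`. -/
def MemB1WPAA0 {X : Type*} [NormedAddCommGroup X] (ρ₁ ρ₂ : ℝ → ℝ) (q : ℝ → X) : Prop :=
  Filter.Tendsto (fun T : ℝ =>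
      (1 / (2 * ∫ t in (-T)..T, ρ₁ t)) *
        ∫ t in (-T)..T,
          (Filter.limsup (fun l : ℝ =>
            (1 / (2 * l)) * ∫ s in (t - l)..(t + l), ‖q s‖) Filter.atTop) * ρ₂ t)
    Filter.atTop (nhds 0)

/-! The convolution `Q` is bounded by `‖R‖_{L¹(0,∞)} · ‖u‖_∞`. The upper Besicovitch mean of a
bounded function is at most its bound `M`, so the weighted average in `MemB1WPAA0` is at most
`(M / 2) · ∫ρ₂ / ∫ρ₁`, which tends to `0`. -/

open Topology

section Convolution

variable {G : Type*} [NormedAddCommGroup G]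

theorem preimage_sub_left_Ioi_zero (t : ℝ) : (fun s => t - s) ⁻¹' Ioi 0 = Iio t := by
  ext s; simp

theorem setIntegral_Iio_comp_sub_left [NormedSpace ℝ G] (f : ℝ → G) (t : ℝ) :
    ∫ s in Iio t, f (t - s) = ∫ v in Ioi 0, f v := by
  rw [← preimage_sub_left_Ioi_zero]
  exact (Measure.measurePreserving_sub_left volume t).setIntegral_preimage_emb
    (MeasurableEquiv.subLeft t).measurableEmbedding f (Ioi 0)

theorem MeasureTheory.IntegrableOn.comp_sub_left_Iio {f : ℝ → G} (hf : IntegrableOn f (Ioi 0))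
    (t : ℝ) : IntegrableOn (fun s => f (t - s)) (Iio t) := by
  rw [← preimage_sub_left_Ioi_zero]
  exact ((Measure.measurePreserving_sub_left volume t).integrableOn_comp_preimage
    (MeasurableEquiv.subLeft t).measurableEmbedding).mpr hf

variable {𝕜 E F : Type*} [NontriviallyNormedField 𝕜] [NormedAddCommGroup E] [NormedSpace 𝕜 E]
  [NormedAddCommGroup F] [NormedSpace 𝕜 F] [NormedSpace ℝ F]

theorem norm_integral_Iio_apply_sub_le {R : ℝ → E →L[𝕜] F}
    (hR : IntegrableOn (fun v => ‖R v‖) (Ioi 0)) {u : ℝ → E} {C : ℝ} (hu : ∀ᵐ s, ‖u s‖ ≤ C)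
    (t : ℝ) : ‖∫ s in Iio t, R (t - s) (u s)‖ ≤ (∫ v in Ioi 0, ‖R v‖) * C :=
  calc ‖∫ s in Iio t, R (t - s) (u s)‖ ≤ ∫ s in Iio t, ‖R (t - s)‖ * C :=
        norm_integral_le_of_norm_le ((hR.comp_sub_left_Iio t).mul_const C)
          (ae_restrict_of_ae (hu.mono fun s hs => (R (t - s)).le_opNorm_of_le hs))
    _ = (∫ v in Ioi 0, ‖R v‖) * C := by
        rw [integral_mul_const, setIntegral_Iio_comp_sub_left (fun v => ‖R v‖)]

end Convolution

section UpperMean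

variable {X : Type*} [NormedAddCommGroup X]

noncomputable def localMeanNorm (q : ℝ → X) (t l : ℝ) : ℝ :=
  (1 / (2 * l)) * ∫ s in (t - l)..(t + l), ‖q s‖

noncomputable def upperMeanNorm (q : ℝ → X) (t : ℝ) : ℝ :=
  limsup (localMeanNorm q t) atTop

theorem localMeanNorm_nonneg (q : ℝ → X) (t : ℝ) {l : ℝ} (hl : 0 < l) :
    0 ≤ localMeanNorm q t l :=
  mul_nonneg (by positivity)
    (intervalIntegral.integral_nonneg (by linarith) fun _ _ => norm_nonneg _)

theorem localMeanNorm_le {q : ℝ → X} {M : ℝ} (hq : ∀ s, ‖q s‖ ≤ M) (t : ℝ) {l : ℝ}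
    (hl : 0 < l) : localMeanNorm q t l ≤ M := by
  have hint : ∫ s in (t - l)..(t + l), ‖q s‖ ≤ M * (2 * l) := by
    calc ∫ s in (t - l)..(t + l), ‖q s‖ ≤ ‖∫ s in (t - l)..(t + l), ‖q s‖‖ := Real.le_norm_self _
      _ ≤ M * |t + l - (t - l)| :=
          intervalIntegral.norm_integral_le_of_norm_le_const fun s _ => by simpa using hq s
      _ = M * (2 * l) := by rw [abs_of_pos (by linarith)]; ring
  calc localMeanNorm q t l ≤ (1 / (2 * l)) * (M * (2 * l)) :=
        mul_le_mul_of_nonneg_left hint (by positivity)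
    _ = M := by field_simp

theorem upperMeanNorm_mem_Icc {q : ℝ → X} {M : ℝ} (hq : ∀ s, ‖q s‖ ≤ M) (t : ℝ) :
    upperMeanNorm q t ∈ Icc 0 M := by
  have hle : ∀ᶠ l in atTop, localMeanNorm q t l ≤ M :=
    (eventually_gt_atTop 0).mono fun _ hl => localMeanNorm_le hq t hl
  have hge : ∀ᶠ l in atTop, 0 ≤ localMeanNorm q t l :=
    (eventually_gt_atTop 0).mono fun _ hl => localMeanNorm_nonneg q t hl
  exact ⟨le_limsup_of_frequently_le hge.frequently (isBoundedUnder_of_eventually_le hle),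
    limsup_le_of_le (isCoboundedUnder_le_of_eventually_le atTop hge) hle⟩

end UpperMean

theorem intervalIntegral_mul_le_const_mul {f ρ : ℝ → ℝ} {a b M : ℝ} (hab : a ≤ b) (hM : 0 ≤ M)
    (hf : ∀ t, f t ≤ M) (hρ : ∀ᵐ t, 0 ≤ ρ t) (hρi : IntervalIntegrable ρ volume a b) :
    ∫ t in a..b, f t * ρ t ≤ M * ∫ t in a..b, ρ t := by
  by_cases hfρ : IntervalIntegrable (fun t => f t * ρ t) volume a b
  · rw [← intervalIntegral.integral_const_mul]
    exact intervalIntegral.integral_mono_ae hab hfρ (hρi.const_mul M)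
      (hρ.mono fun t ht => mul_le_mul_of_nonneg_right (hf t) ht)
  · rw [intervalIntegral.integral_undef hfρ]
    exact mul_nonneg hM (intervalIntegral.integral_nonneg_of_ae hab hρ)

theorem memB1WPAA0_of_forall_norm_le {X : Type*} [NormedAddCommGroup X] {ρ₁ ρ₂ : ℝ → ℝ}
    (hρ₁ : ∀ᵐ t, 0 ≤ ρ₁ t) (hρ₂ : ∀ᵐ t, 0 ≤ ρ₂ t)
    (hρ₂i : ∀ a b, IntervalIntegrable ρ₂ volume a b)
    (hweights : Tendsto (fun T => (∫ t in (-T)..T, ρ₂ t) / ∫ t in (-T)..T, ρ₁ t) atTop (𝓝 0))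
    {q : ℝ → X} {M : ℝ} (hq : ∀ s, ‖q s‖ ≤ M) : MemB1WPAA0 ρ₁ ρ₂ q := by
  have hM : 0 ≤ M := (norm_nonneg _).trans (hq 0)
  change Tendsto (fun T => (1 / (2 * ∫ t in (-T)..T, ρ₁ t)) *
    ∫ t in (-T)..T, upperMeanNorm q t * ρ₂ t) atTop (𝓝 0)
  have hlim : Tendsto (fun T => M / 2 * ((∫ t in (-T)..T, ρ₂ t) / ∫ t in (-T)..T, ρ₁ t))
      atTop (𝓝 0) := by
    simpa using hweights.const_mul (M / 2)
  have hcoef : ∀ᶠ T in atTop, 0 ≤ 1 / (2 * ∫ t in (-T)..T, ρ₁ t) :=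
    (eventually_ge_atTop 0).mono fun T hT => by
      have := intervalIntegral.integral_nonneg_of_ae (by linarith : -T ≤ T) hρ₁
      positivity
  refine squeeze_zero' ?_ ?_ hlim <;>
    filter_upwards [hcoef, eventually_ge_atTop 0] with T hcoefT hT
  · exact mul_nonneg hcoefT (intervalIntegral.integral_nonneg_of_ae (by linarith)
      (hρ₂.mono fun t ht => mul_nonneg (upperMeanNorm_mem_Icc hq t).1 ht))
  · calc (1 / (2 * ∫ t in (-T)..T, ρ₁ t)) * ∫ t in (-T)..T, upperMeanNorm q t * ρ₂ t
        ≤ (1 / (2 * ∫ t in (-T)..T, ρ₁ t)) * (M * ∫ t in (-T)..T, ρ₂ t) :=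
          mul_le_mul_of_nonneg_left (intervalIntegral_mul_le_const_mul (by linarith) hM
            (fun t => (upperMeanNorm_mem_Icc hq t).2) hρ₂ (hρ₂i _ _)) hcoefT
      _ = M / 2 * ((∫ t in (-T)..T, ρ₂ t) / ∫ t in (-T)..T, ρ₁ t) := by ring

theorem infinite_convolution_B1WPAA0_general
    {X : Type*} [NormedAddCommGroup X] [NormedSpace ℂ X]
    (ρ₁ ρ₂ : ℝ → ℝ) (hρ₁ : IsWeightUInfty ρ₁) (hρ₂ : IsWeightUInfty ρ₂)
    (R : ℝ → X →L[ℂ] X)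
    (hR : IntegrableOn (fun v : ℝ => ‖R v‖) (Set.Ioi 0) volume)
    (hweights : Filter.Tendsto (fun T : ℝ =>
        (∫ t in (-T)..T, ρ₂ t) / ∫ t in (-T)..T, ρ₁ t) Filter.atTop (nhds 0))
    (u : ℝ → X)
    (hubdd : ∃ C : ℝ, ∀ᵐ t : ℝ ∂volume, ‖u t‖ ≤ C)
    (Q : ℝ → X) (hQ : ∀ t : ℝ, Q t = ∫ s in Set.Iio t, R (t - s) (u s)) :
    MemB1WPAA0 ρ₁ ρ₂ Q := by
  obtain ⟨C, hC⟩ := hubdd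
  have hQ_le : ∀ t, ‖Q t‖ ≤ (∫ v in Ioi 0, ‖R v‖) * C := fun t =>
    hQ t ▸ norm_integral_Iio_apply_sub_le hR hC t
  exact memB1WPAA0_of_forall_norm_le (hρ₁.2.1.mono fun _ h => h.le)
    (hρ₂.2.1.mono fun _ h => h.le) hρ₂.1 hweights hQ_le

/-- If `(R(t))_{t>0}` is a strongly continuous operator family with
`∫_0^∞ ‖R(v)‖ dv < ∞`, `∫_{-T}^{T} ρ₂ / ∫_{-T}^{T} ρ₁ → 0` and
`u ∈ B^1WPAA_0(ℝ, X, ρ₁, ρ₂)` is essentially bounded, then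
`Q(t) := ∫_{-∞}^t R(t-s) u(s) ds` belongs to `B^1WPAA_0(ℝ, X, ρ₁, ρ₂)`. -/
theorem infinite_convolution_B1WPAA0
    {X : Type*} [NormedAddCommGroup X] [NormedSpace ℂ X] [CompleteSpace X]
    (ρ₁ ρ₂ : ℝ → ℝ) (hρ₁ : IsWeightUInfty ρ₁) (hρ₂ : IsWeightUInfty ρ₂)
    (R : ℝ → X →L[ℂ] X)
    (hRcont : ∀ x : X, ContinuousOn (fun t : ℝ => R t x) (Set.Ioi 0))
    (hR : IntegrableOn (fun v : ℝ => ‖R v‖) (Set.Ioi 0) volume)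
    (hweights : Filter.Tendsto (fun T : ℝ =>
        (∫ t in (-T)..T, ρ₂ t) / ∫ t in (-T)..T, ρ₁ t) Filter.atTop (nhds 0))
    (u : ℝ → X) (hu : MemB1WPAA0 ρ₁ ρ₂ u)
    (humeas : AEStronglyMeasurable u volume)
    (hubdd : ∃ C : ℝ, ∀ᵐ t : ℝ ∂volume, ‖u t‖ ≤ C)
    (Q : ℝ → X) (hQ : ∀ t : ℝ, Q t = ∫ s in Set.Iio t, R (t - s) (u s)) :
    MemB1WPAA0 ρ₁ ρ₂ Q :=
  infinite_convolution_B1WPAA0_general ρ₁ ρ₂ hρ₁ hρ₂ R hR hweights u hubdd Q hQ
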